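/- arXiv:math/0408108 — 6 statements merged into one kernel-verified Lean document; each statement's English description precedes it below -/
import Mathlib

section
/- If n is a multiple of m, then RT(n, K_s, ρ-mean) ≥ (n²/m²) · RT(m, K_s, ρ-mean). -/
open Finset
open scoped Classical

/-- The number of distinct colors on edges incident to `v`, for the edge coloring `c`. -/
noncomputable def colorsAt {V : Type*} [Fintype V] (G : SimpleGraph V)
    (c : Sym2 V → ℕ) (v : V) : ℕ :=
  ((G.incidenceFinset v).image c).card

/-- The colored graph `(G, c)` contains a monochromatic clique on `k` vertices. -/
def hasMonoClique {V : Type*} (G : SimpleGraph V) (c : Sym2 V → ℕ) (k : ℕ) : Prop :=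
  ∃ T : Finset V, T.card = k ∧ (∀ u ∈ T, ∀ v ∈ T, u ≠ v → G.Adj u v) ∧
    ∃ i : ℕ, ∀ u ∈ T, ∀ v ∈ T, u ≠ v → c s(u, v) = i

/-- The mean Ramsey–Turán number `RT(n, K_s, ρ-mean)`: the maximum number of edges of a
graph on `n` vertices admitting a `ρ`-mean edge coloring with no monochromatic `K_s`. -/
noncomputable def RTmean (n s : ℕ) (ρ : ℝ) : ℕ :=
  sSup {e : ℕ | ∃ (G : SimpleGraph (Fin n)) (c : Sym2 (Fin n) → ℕ),
    (∑ v, (colorsAt G c v : ℝ)) ≤ ρ * n ∧ ¬ hasMonoClique G c s ∧ G.edgeFinset.card = e}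

/-!
Blow up every vertex of an optimal coloured graph on `m` vertices into an independent set of
`k = n / m` vertices and colour each new edge by the colour of its image. A vertex of the blow-up
sees exactly the colours its image sees, so the colour-degree sum is multiplied by `k`, as is the
number of vertices; a clique of the blow-up maps injectively onto a clique of the same colour;
and the number of edges is multiplied by `k ^ 2`.
-/

namespace SimpleGraph

variable {V W : Type*}

theorem hasMonoClique_of_comap {f : W → V} {G : SimpleGraph V} {c : Sym2 V → ℕ} {s : ℕ}
    (h : hasMonoClique (G.comap f) (c ∘ Sym2.map f) s) : hasMonoClique G c s := by
  obtain ⟨T, hcard, hclique, i, hmono⟩ := h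
  have hinj : Set.InjOn f T := fun u hu v hv huv => by
    by_contra hne
    exact (comap_adj.1 (hclique u hu v hv hne)).ne huv
  refine ⟨T.image f, by rw [card_image_of_injOn hinj, hcard], ?_, i, ?_⟩ <;>
    simp only [forall_mem_image]
  · exact fun u hu v hv hne => hclique u hu v hv (ne_of_apply_ne f hne)
  · exact fun u hu v hv hne => hmono u hu v hv (ne_of_apply_ne f hne)

variable [Fintype V]

theorem incidenceFinset_eq_image_neighborFinset (G : SimpleGraph V) (v : V) :
    G.incidenceFinset v = (G.neighborFinset v).image (s(v, ·)) := by
  ext e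
  induction e using Sym2.ind with
  | _ a b =>
    simp only [mem_incidenceFinset, mk'_mem_incidenceSet_iff, mem_image, mem_neighborFinset,
      Sym2.eq_iff]
    constructor
    · rintro ⟨hab, rfl | rfl⟩
      · exact ⟨b, hab, by simp⟩
      · exact ⟨a, hab.symm, by simp⟩
    · rintro ⟨u, hu, ⟨rfl, rfl⟩ | ⟨rfl, rfl⟩⟩
      · exact ⟨hu, by simp⟩
      · exact ⟨hu.symm, by simp⟩

theorem colorsAt_eq_card_image_neighborFinset (G : SimpleGraph V) (c : Sym2 V → ℕ) (v : V) :
    colorsAt G c v = #((G.neighborFinset v).image fun u => c s(v, u)) := by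
  rw [colorsAt, incidenceFinset_eq_image_neighborFinset, image_image]
  rfl

variable [Fintype W] {f : W → V}

theorem colorsAt_comap (hf : Function.Surjective f) (G : SimpleGraph V) (c : Sym2 V → ℕ)
    (w : W) : colorsAt (G.comap f) (c ∘ Sym2.map f) w = colorsAt G c (f w) := by
  have hnbr : ((G.comap f).neighborFinset w).image f = G.neighborFinset (f w) := by
    rw [neighborFinset_eq_filter, neighborFinset_eq_filter, ← image_univ_of_surjective hf,
      filter_image]
    rfl
  rw [colorsAt_eq_card_image_neighborFinset, colorsAt_eq_card_image_neighborFinset, ← hnbr,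
    image_image]
  rfl

variable [DecidableEq V] {k : ℕ}

theorem sum_comp_of_card_fiber (hf : ∀ v, #{w | f w = v} = k) {M : Type*} [AddCommMonoid M]
    (g : V → M) : ∑ w, g (f w) = k • ∑ v, g v := by
  rw [← sum_fiberwise univ f, smul_sum]
  refine sum_congr rfl fun v _ => ?_
  rw [sum_congr rfl fun w hw => by rw [(mem_filter.1 hw).2], sum_const, hf]

theorem card_filter_comp_of_card_fiber (hf : ∀ v, #{w | f w = v} = k) (P : V → Prop) :
    #{w | P (f w)} = #{v | P v} * k := by
  rw [card_filter, card_filter, sum_comp_of_card_fiber hf (fun v => if P v then 1 else 0),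
    smul_eq_mul, mul_comm]

theorem degree_comap_of_card_fiber (hf : ∀ v, #{w | f w = v} = k) (G : SimpleGraph V) (w : W) :
    (G.comap f).degree w = G.degree (f w) * k := by
  rw [← card_neighborFinset_eq_degree, ← card_neighborFinset_eq_degree, neighborFinset_eq_filter,
    neighborFinset_eq_filter]
  exact card_filter_comp_of_card_fiber hf (G.Adj (f w))

theorem card_edgeFinset_comap_of_card_fiber (hf : ∀ v, #{w | f w = v} = k)
    (G : SimpleGraph V) : #(G.comap f).edgeFinset = #G.edgeFinset * k ^ 2 := by
  have hdeg : 2 * #(G.comap f).edgeFinset = 2 * (#G.edgeFinset * k ^ 2) := by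
    rw [← sum_degrees_eq_twice_card_edges]
    simp only [degree_comap_of_card_fiber hf]
    rw [sum_comp_of_card_fiber hf (fun v => G.degree v * k), ← sum_mul,
      sum_degrees_eq_twice_card_edges, smul_eq_mul]
    ring
  omega

end SimpleGraph

theorem Fin.card_filter_divNat_eq (m k : ℕ) (v : Fin m) :
    #{u : Fin (m * k) | u.divNat = v} = k :=
  calc #{u : Fin (m * k) | u.divNat = v} = #({v} ×ˢ (univ : Finset (Fin k))) :=
        card_equiv finProdFinEquiv.symm (by simp [finProdFinEquiv_symm_apply, eq_comm])
    _ = k := by simp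

def RTmeanSet (n s : ℕ) (ρ : ℝ) : Set ℕ :=
  {e : ℕ | ∃ (G : SimpleGraph (Fin n)) (c : Sym2 (Fin n) → ℕ),
    (∑ v, (colorsAt G c v : ℝ)) ≤ ρ * n ∧ ¬ hasMonoClique G c s ∧ G.edgeFinset.card = e}

theorem RTmean_eq_sSup_RTmeanSet (n s : ℕ) (ρ : ℝ) : RTmean n s ρ = sSup (RTmeanSet n s ρ) :=
  rfl

theorem bddAbove_RTmeanSet (n s : ℕ) (ρ : ℝ) : BddAbove (RTmeanSet n s ρ) := by
  refine ⟨n.choose 2, ?_⟩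
  rintro e ⟨G, c, -, -, rfl⟩
  simpa using G.card_edgeFinset_le_card_choose_two

theorem mul_sq_mem_RTmeanSet {m k s : ℕ} {ρ : ℝ} {e : ℕ} (hk : 0 < k)
    (he : e ∈ RTmeanSet m s ρ) : e * k ^ 2 ∈ RTmeanSet (m * k) s ρ := by
  obtain ⟨G, c, hcolors, hmono, rfl⟩ := he
  have hfiber := Fin.card_filter_divNat_eq m k
  have hsurj : Function.Surjective (Fin.divNat : Fin (m * k) → Fin m) := fun v => by
    obtain ⟨u, hu⟩ := card_pos.1 ((hfiber v).symm ▸ hk)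
    exact ⟨u, (mem_filter.1 hu).2⟩
  refine ⟨G.comap Fin.divNat, c ∘ Sym2.map Fin.divNat, ?_,
    fun h => hmono (SimpleGraph.hasMonoClique_of_comap h),
    SimpleGraph.card_edgeFinset_comap_of_card_fiber hfiber G⟩
  calc ∑ u, (colorsAt (G.comap Fin.divNat) (c ∘ Sym2.map Fin.divNat) u : ℝ)
      = k • ∑ v, (colorsAt G c v : ℝ) := by
        simp only [SimpleGraph.colorsAt_comap hsurj]
        exact SimpleGraph.sum_comp_of_card_fiber hfiber fun v => (colorsAt G c v : ℝ)
    _ ≤ k • (ρ * m) := nsmul_le_nsmul_right hcolors k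
    _ = ρ * ((m * k : ℕ) : ℝ) := by push_cast; ring

theorem RTmean_mul_sq_le (m k s : ℕ) (ρ : ℝ) : RTmean m s ρ * k ^ 2 ≤ RTmean (m * k) s ρ := by
  rcases Nat.eq_zero_or_pos k with rfl | hk
  · simp
  rcases (RTmeanSet m s ρ).eq_empty_or_nonempty with hempty | hnonempty
  · simp [RTmean_eq_sSup_RTmeanSet, hempty]
  exact le_csSup (bddAbove_RTmeanSet _ s ρ)
    (mul_sq_mem_RTmeanSet hk (Nat.sSup_mem hnonempty (bddAbove_RTmeanSet m s ρ)))

theorem RTmean_blowup_lower_bound_general (s : ℕ) (ρ : ℝ)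
    (m n : ℕ) (hdvd : m ∣ n) :
    RTmean m s ρ * n ^ 2 ≤ RTmean n s ρ * m ^ 2 := by
  obtain ⟨k, rfl⟩ := hdvd
  calc RTmean m s ρ * (m * k) ^ 2 = RTmean m s ρ * k ^ 2 * m ^ 2 := by ring
    _ ≤ RTmean (m * k) s ρ * m ^ 2 := Nat.mul_le_mul_right _ (RTmean_mul_sq_le m k s ρ)

/-- If `n` is a multiple of `m`, then
`RT(n, K_s, ρ-mean) ≥ (n²/m²) · RT(m, K_s, ρ-mean)`. -/
theorem RTmean_blowup_lower_bound (s : ℕ) (hs : 2 ≤ s) (ρ : ℝ) (hρ : 1 ≤ ρ)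
    (m n : ℕ) (hm : 0 < m) (hdvd : m ∣ n) :
    RTmean m s ρ * n ^ 2 ≤ RTmean n s ρ * m ^ 2 :=
  RTmean_blowup_lower_bound_general s ρ m n hdvd
end

section
/- Every 2-mean edge coloring of the complete graph K_6 contains a monochromatic triangle. -/
open Finset
open scoped Classical

/-- The colored graph `(G, c)` contains a monochromatic triangle. -/
def hasMonoTriangle {V : Type*} (G : SimpleGraph V) (c : Sym2 V → ℕ) : Prop :=
  ∃ x y z : V, G.Adj x y ∧ G.Adj x z ∧ G.Adj y z ∧
    c s(x, y) = c s(x, z) ∧ c s(x, z) = c s(y, z)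

/-- The color degree expressed via the other endpoints. -/
noncomputable def D (c : Sym2 (Fin 6) → ℕ) (v : Fin 6) : ℕ :=
  ((univ.erase v).image (fun u => c s(v, u))).card

lemma colorsAt_eq (c : Sym2 (Fin 6) → ℕ) (v : Fin 6) :
    colorsAt (⊤ : SimpleGraph (Fin 6)) c v = D c v := by
  unfold colorsAt D
  congr 1
  ext n
  simp only [mem_image, SimpleGraph.mem_incidenceFinset, SimpleGraph.incidenceSet,
    Set.mem_setOf_eq, mem_erase, mem_univ, and_true]
  constructor
  · rintro ⟨e, ⟨he, hv⟩, rfl⟩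
    obtain ⟨b, rfl⟩ := Sym2.mem_iff_exists.mp hv
    refine ⟨b, ?_, rfl⟩
    intro h
    subst h
    exact (SimpleGraph.mem_edgeSet _ |>.mp he).ne rfl
  · rintro ⟨u, hu, rfl⟩
    exact ⟨s(v, u), ⟨(SimpleGraph.mem_edgeSet _).mpr (SimpleGraph.top_adj v u |>.mpr
      (fun h => hu h.symm)), Sym2.mem_mk_left v u⟩, rfl⟩

lemma one_le_D (c : Sym2 (Fin 6) → ℕ) (v : Fin 6) : 1 ≤ D c v := by
  rw [Nat.one_le_iff_ne_zero, ← Nat.pos_iff_ne_zero, D, card_pos]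
  refine (Nonempty.image ?_ _)
  rw [← card_pos, card_erase_of_mem (mem_univ v)]
  simp

lemma three_le_D (c : Sym2 (Fin 6) → ℕ) (v x y z : Fin 6)
    (hx : x ≠ v) (hy : y ≠ v) (hz : z ≠ v)
    (h1 : c s(v, x) ≠ c s(v, y)) (h2 : c s(v, x) ≠ c s(v, z))
    (h3 : c s(v, y) ≠ c s(v, z)) : 3 ≤ D c v := by
  have hsub : ({c s(v, x), c s(v, y), c s(v, z)} : Finset ℕ)
      ⊆ (univ.erase v).image (fun u => c s(v, u)) := by
    intro t ht
    simp only [mem_insert, mem_singleton] at ht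
    rcases ht with h | h | h <;> subst h <;>
      exact mem_image_of_mem _ (by simp [hx, hy, hz])
  have hcard : ({c s(v, x), c s(v, y), c s(v, z)} : Finset ℕ).card = 3 := by
    rw [card_insert_of_notMem (by simp [h1, h2]),
      card_insert_of_notMem (by simp [h3]), card_singleton]
  calc 3 = ({c s(v, x), c s(v, y), c s(v, z)} : Finset ℕ).card := hcard.symm
    _ ≤ _ := card_le_card hsub

/-- Every 2-mean edge coloring of `K_6` contains a monochromatic triangle. -/
theorem K6_two_mean_mono_triangle (c : Sym2 (Fin 6) → ℕ)
    (hmean : ∑ v, colorsAt (⊤ : SimpleGraph (Fin 6)) c v ≤ 2 * 6) :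
    hasMonoTriangle (⊤ : SimpleGraph (Fin 6)) c := by
  by_contra hno
  have tri : ∀ x y z : Fin 6, x ≠ y → x ≠ z → y ≠ z →
      c s(x, y) = c s(x, z) → c s(x, z) = c s(y, z) → False := by
    intro x y z h1 h2 h3 e1 e2
    exact hno ⟨x, y, z, (SimpleGraph.top_adj x y).mpr h1, (SimpleGraph.top_adj x z).mpr h2,
      (SimpleGraph.top_adj y z).mpr h3, e1, e2⟩
  have swap : ∀ a b : Fin 6, c s(a, b) = c s(b, a) := by
    intro a b; rw [Sym2.eq_swap]
  have hmean' : ∑ v, D c v ≤ 12 := by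
    calc ∑ v, D c v = ∑ v, colorsAt (⊤ : SimpleGraph (Fin 6)) c v :=
          Finset.sum_congr rfl (fun v _ => (colorsAt_eq c v).symm)
      _ ≤ 12 := hmean
  -- Step A : every vertex sees at least 2 colors
  have stepA : ∀ v : Fin 6, 2 ≤ D c v := by
    intro v
    by_contra hv
    have hv1 : D c v = 1 := le_antisymm (by omega) (one_le_D c v)
    obtain ⟨r, hrr⟩ := card_eq_one.mp hv1
    have hr : ∀ u : Fin 6, u ≠ v → c s(v, u) = r := by
      intro u hu
      have : c s(v, u) ∈ (univ.erase v).image (fun u => c s(v, u)) :=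
        mem_image_of_mem _ (by simp [hu])
      rw [hrr, mem_singleton] at this
      exact this
    -- edges not through v avoid r when endpoints adj to v would make triangle
    have hnr : ∀ w w' : Fin 6, w ≠ v → w' ≠ v → w ≠ w' → c s(w, w') ≠ r := by
      intro w w' hwv hw'v hww' h
      exact tri v w w' hwv.symm hw'v.symm hww'
        (by rw [hr w hwv, hr w' hw'v]) (by rw [hr w' hw'v, h])
    -- find u ≠ v with D c u ≤ 2
    have e1 : ∑ x ∈ univ.erase v, D c x + D c v = ∑ x, D c x :=
      sum_erase_add _ _ (mem_univ v)
    have hcv : (univ.erase v).card = 5 := by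
      rw [card_erase_of_mem (mem_univ v)]; simp
    have hex : ∃ u ∈ univ.erase v, D c u ≤ 2 := by
      by_contra hc
      push_neg at hc
      have h5 : (univ.erase v).card • 3 ≤ ∑ x ∈ univ.erase v, D c x :=
        card_nsmul_le_sum _ _ _ (fun x hx => hc x hx)
      rw [hcv, smul_eq_mul] at h5
      omega
    obtain ⟨u, hu, hDu⟩ := hex
    have huv : u ≠ v := (mem_erase.mp hu).1
    -- all edges from u to vertices ≠ u, v share a color
    have hs : ∀ w, w ≠ u → w ≠ v → ∀ w', w' ≠ u → w' ≠ v →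
        c s(u, w) = c s(u, w') := by
      intro w hwu hwv w' hw'u hw'v
      by_contra hne
      rcases eq_or_ne w w' with rfl | hww'
      · exact hne rfl
      have h1 : c s(u, w) ≠ r := by
        rw [swap]; exact hnr w u hwv huv (fun h => hwu h)
      have h2 : c s(u, w') ≠ r := by
        rw [swap]; exact hnr w' u hw'v huv (fun h => hw'u h)
      have hru : c s(u, v) = r := by rw [swap]; exact hr u huv
      have := three_le_D c u v w w' huv.symm hwu
        hw'u (by rw [hru]; exact fun h => h1 h.symm)
        (by rw [hru]; exact fun h => h2 h.symm) hne
      omega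
    -- every other vertex sees ≥ 3 colors
    have hw3 : ∀ w, w ≠ v → w ≠ u → 3 ≤ D c w := by
      intro w hwv hwu
      obtain ⟨w2, hw2⟩ : ((((univ : Finset (Fin 6)).erase v).erase u).erase w).Nonempty := by
        rw [← card_pos, card_erase_of_mem (by simp [hwu, hwv]),
          card_erase_of_mem (by simp [huv]), card_erase_of_mem (mem_univ v)]
        simp
      have hw2w : w2 ≠ w := (mem_erase.mp hw2).1
      have hw2u : w2 ≠ u := (mem_erase.mp (mem_erase.mp hw2).2).1
      have hw2v : w2 ≠ v := (mem_erase.mp (mem_erase.mp (mem_erase.mp hw2).2).2).1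
      have hcwv : c s(w, v) = r := by rw [swap]; exact hr w hwv
      have hcwu : c s(w, u) ≠ r := hnr w u hwv huv hwu
      have hcww2 : c s(w, w2) ≠ r := hnr w w2 hwv hw2v (fun h => hw2w h.symm)
      have hcne : c s(w, u) ≠ c s(w, w2) := by
        intro h
        have huw : c s(u, w) = c s(u, w2) := hs w hwu hwv w2 hw2u hw2v
        exact tri u w w2 (fun h' => hwu h'.symm) (fun h' => hw2u h'.symm)
          (fun h' => hw2w h'.symm) huw (by rw [← huw, swap, h])
      exact three_le_D c w v u w2 (fun h => hwv h.symm) (fun h => hwu h.symm)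
        hw2w (by rw [hcwv]; exact fun h => hcwu h.symm)
        (by rw [hcwv]; exact fun h => hcww2 h.symm) hcne
    -- sum up
    have e2 : ∑ x ∈ (univ.erase v).erase u, D c x + D c u
        = ∑ x ∈ univ.erase v, D c x := sum_erase_add _ _ hu
    have e3 : ((univ.erase v).erase u).card = 4 := by
      rw [card_erase_of_mem hu, hcv]
    have e4 : ((univ.erase v).erase u).card • 3
        ≤ ∑ x ∈ (univ.erase v).erase u, D c x := by
      refine card_nsmul_le_sum _ _ _ (fun x hx => ?_)
      exact hw3 x (mem_erase.mp (mem_erase.mp hx).2).1 (mem_erase.mp hx).1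
    rw [e3, smul_eq_mul] at e4
    have h1v : 1 ≤ D c v := one_le_D c v
    omega
  -- Step B : every vertex sees at most 2 colors
  have stepB : ∀ v : Fin 6, D c v ≤ 2 := by
    intro v
    by_contra hv
    push_neg at hv
    have e1 : ∑ x ∈ univ.erase v, D c x + D c v = ∑ x, D c x :=
      sum_erase_add _ _ (mem_univ v)
    have hcv : (univ.erase v).card = 5 := by
      rw [card_erase_of_mem (mem_univ v)]; simp
    have h5 : (univ.erase v).card • 2 ≤ ∑ x ∈ univ.erase v, D c x :=
      card_nsmul_le_sum _ _ _ (fun x _ => stepA x)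
    rw [hcv, smul_eq_mul] at h5
    omega
  -- Step C : local pigeonhole at vertex 0
  let f : Fin 6 → ℕ := fun u => c s(0, u)
  have hmaps : ∀ a ∈ (univ : Finset (Fin 6)).erase 0,
      f a ∈ ((univ : Finset (Fin 6)).erase 0).image f :=
    fun a ha => mem_image_of_mem _ ha
  have hcard : (((univ : Finset (Fin 6)).erase 0).image f).card * 2
      < ((univ : Finset (Fin 6)).erase 0).card := by
    have h1 : (((univ : Finset (Fin 6)).erase 0).image f).card ≤ 2 := stepB 0
    have h2 : ((univ : Finset (Fin 6)).erase 0).card = 5 := by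
      rw [card_erase_of_mem (mem_univ 0)]; simp
    omega
  obtain ⟨a, _, hfib⟩ :=
    exists_lt_card_fiber_of_mul_lt_card_of_maps_to hmaps hcard
  rw [two_lt_card_iff] at hfib
  obtain ⟨x, y, z, hx, hy, hz, hxy, hxz, hyz⟩ := hfib
  rw [mem_filter, mem_erase] at hx hy hz
  obtain ⟨⟨hx0, -⟩, hfx⟩ := hx
  obtain ⟨⟨hy0, -⟩, hfy⟩ := hy
  obtain ⟨⟨hz0, -⟩, hfz⟩ := hz
  have hax' : c s(0, x) = a := hfx
  have hay' : c s(0, y) = a := hfy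
  have haz' : c s(0, z) = a := hfz
  -- none of the triangle edges has color a
  have hexy : c s(x, y) ≠ a := by
    intro h
    exact tri 0 x y hx0.symm hy0.symm hxy (by rw [hax', hay'])
      (by rw [hay', h])
  have hexz : c s(x, z) ≠ a := by
    intro h
    exact tri 0 x z hx0.symm hz0.symm hxz (by rw [hax', haz'])
      (by rw [haz', h])
  have heyz : c s(y, z) ≠ a := by
    intro h
    exact tri 0 y z hy0.symm hz0.symm hyz (by rw [hay', haz'])
      (by rw [haz', h])
  have hax : c s(x, 0) = a := by rw [swap]; exact hax'
  have hay : c s(y, 0) = a := by rw [swap]; exact hay'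
  -- at x : the two non-a edges coincide
  have exx : c s(x, y) = c s(x, z) := by
    by_contra hne
    have := three_le_D c x 0 y z (fun h => hx0 h.symm) (fun h => hxy h.symm) (fun h => hxz h.symm)
      (by rw [hax]; exact fun h => hexy h.symm)
      (by rw [hax]; exact fun h => hexz h.symm) hne
    have := stepB x
    omega
  have eyy : c s(y, x) = c s(y, z) := by
    by_contra hne
    have hexy' : c s(y, x) ≠ a := by rw [← swap]; exact hexy
    have := three_le_D c y 0 x z (fun h => hy0 h.symm) hxy (fun h => hyz h.symm)
      (by rw [hay]; exact fun h => hexy' h.symm)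
      (by rw [hay]; exact fun h => heyz h.symm) hne
    have := stepB y
    omega
  exact tri x y z hxy hxz hyz exx (by rw [← exx, swap, eyy])
end

section
/- For every ε > 0 there exists α > 0 such that for all sufficiently large m: every graph on m vertices with more than RT(m, K_s, ρ-mean) + εm²/4 edges, equipped with a (ρ+α)-mean edge coloring, contains a monochromatic K_s. -/
/-!
Delete all edges at `k = ⌈αm⌉` non-isolated vertices, or at every non-isolated vertex if
there are fewer than `k` of them. Each deleted non-isolated vertex lowers the color
sum by at least one, so a `(ρ+α)`-mean coloring becomes a `ρ`-mean one, while at most `k·m`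
edges are lost. The remaining graph therefore has at most `RT(m, K_s, ρ-mean)` edges, and
`k·m < (αm + 1)m ≤ εm²/4` once `α = ε/8` and `εm > 8`.
-/

open Finset
open scoped Classical

def deleteIncident {V : Type*} (G : SimpleGraph V) (S : Finset V) : SimpleGraph V where
  Adj u v := G.Adj u v ∧ u ∉ S ∧ v ∉ S
  symm := ⟨fun _ _ h => ⟨h.1.symm, h.2.2, h.2.1⟩⟩
  loopless := ⟨fun _ h => G.irrefl h.1⟩

section

open SimpleGraph

variable {V : Type*} (G : SimpleGraph V) (S : Finset V)

@[simp]
lemma deleteIncident_adj {u v : V} :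
    (deleteIncident G S).Adj u v ↔ G.Adj u v ∧ u ∉ S ∧ v ∉ S :=
  Iff.rfl

lemma deleteIncident_le : deleteIncident G S ≤ G := fun _ _ h => h.1

lemma incidenceSet_deleteIncident_of_mem {v : V} (hv : v ∈ S) :
    (deleteIncident G S).incidenceSet v = ∅ := by
  refine Set.eq_empty_of_forall_notMem fun e ⟨he, hve⟩ => ?_
  induction e using Sym2.ind with
  | h a b => rcases Sym2.mem_iff.1 hve with rfl | rfl <;> simp_all

lemma card_edgeFinset_le_deleteIncident [Fintype V] :
    #G.edgeFinset ≤ #(deleteIncident G S).edgeFinset + #S * Fintype.card V := by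
  have hcover : G.edgeFinset ⊆
      (deleteIncident G S).edgeFinset ∪ S.biUnion fun v => G.incidenceFinset v := by
    intro e he
    induction e using Sym2.ind with
    | h a b =>
      rw [mem_edgeFinset, mem_edgeSet] at he
      by_cases ha : a ∈ S
      · exact mem_union_right _ <| mem_biUnion.2
          ⟨a, ha, by simpa [mem_incidenceFinset, mk'_mem_incidenceSet_left_iff]⟩
      by_cases hb : b ∈ S
      · exact mem_union_right _ <| mem_biUnion.2
          ⟨b, hb, by simpa [mem_incidenceFinset, mk'_mem_incidenceSet_right_iff]⟩
      · exact mem_union_left _ <| by simp [he, ha, hb]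
  calc #G.edgeFinset
      ≤ #(deleteIncident G S).edgeFinset + #(S.biUnion fun v => G.incidenceFinset v) :=
        (card_le_card hcover).trans (card_union_le _ _)
    _ ≤ #(deleteIncident G S).edgeFinset + ∑ v ∈ S, G.degree v := by
        gcongr
        exact card_biUnion_le.trans_eq (by simp only [card_incidenceFinset_eq_degree])
    _ ≤ #(deleteIncident G S).edgeFinset + #S * Fintype.card V := by
        gcongr
        exact sum_le_card_nsmul _ _ _ fun v _ => (G.degree_lt_card_verts v).le

end

lemma hasMonoClique_mono {V : Type*} {G H : SimpleGraph V} (hHG : H ≤ G) {c : Sym2 V → ℕ}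
    {k : ℕ} (h : hasMonoClique H c k) : hasMonoClique G c k := by
  obtain ⟨T, hT, hadj, i, hi⟩ := h
  exact ⟨T, hT, fun u hu v hv huv => hHG (hadj u hu v hv huv), i, hi⟩

section

variable {V : Type*} [Fintype V] (c : Sym2 V → ℕ)

lemma colorsAt_mono {G H : SimpleGraph V} (hHG : H ≤ G) (v : V) :
    colorsAt H c v ≤ colorsAt G c v :=
  card_le_card <| image_subset_image <| Set.toFinset_subset_toFinset.2
    fun _ he => ⟨SimpleGraph.edgeSet_mono hHG he.1, he.2⟩

lemma colorsAt_deleteIncident_of_mem (G : SimpleGraph V) {S : Finset V} {v : V} (hv : v ∈ S) :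
    colorsAt (deleteIncident G S) c v = 0 := by
  simp [colorsAt, SimpleGraph.incidenceFinset, incidenceSet_deleteIncident_of_mem G S hv]

lemma sum_colorsAt_deleteIncident_le (G : SimpleGraph V) (S : Finset V) :
    ∑ v, colorsAt (deleteIncident G S) c v ≤ ∑ v ∈ Sᶜ, colorsAt G c v := by
  rw [← sum_add_sum_compl S, sum_eq_zero fun v hv => colorsAt_deleteIncident_of_mem c G hv,
    zero_add]
  exact sum_le_sum fun v _ => colorsAt_mono c (deleteIncident_le G S) v

end

lemma Finset.exists_card_le_sum_compl_le {V : Type*} [Fintype V] (f : V → ℕ) (k : ℕ) {B : ℝ}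
    (hB : 0 ≤ B) (h : ∑ v, (f v : ℝ) ≤ B + k) :
    ∃ S : Finset V, #S ≤ k ∧ ∑ v ∈ Sᶜ, (f v : ℝ) ≤ B := by
  set P : Finset V := {v | 0 < f v}
  by_cases hkP : k ≤ #P
  · obtain ⟨S, hSP, rfl⟩ := exists_subset_card_eq hkP
    have hS : (#S : ℝ) ≤ ∑ v ∈ S, (f v : ℝ) := by
      simpa using card_nsmul_le_sum S (fun v => (f v : ℝ)) 1
        fun v hv => Nat.one_le_cast.2 (mem_filter.1 (hSP hv)).2
    refine ⟨S, le_rfl, ?_⟩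
    linarith [sum_add_sum_compl S fun v => (f v : ℝ)]
  · refine ⟨P, by omega, ?_⟩
    rwa [sum_eq_zero fun v hv => by simpa [P] using hv]

lemma card_edgeFinset_le_RTmean {n s : ℕ} {ρ : ℝ} (G : SimpleGraph (Fin n))
    (c : Sym2 (Fin n) → ℕ) (hc : ∑ v, (colorsAt G c v : ℝ) ≤ ρ * n)
    (hG : ¬hasMonoClique G c s) :
    #G.edgeFinset ≤ RTmean n s ρ :=
  le_csSup ⟨Fintype.card (Sym2 (Fin n)), fun _ ⟨_, _, _, _, he⟩ => he ▸ card_le_univ _⟩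
    ⟨G, c, hc, hG, rfl⟩

lemma card_edgeFinset_le_RTmean_add {m s k : ℕ} {ρ : ℝ} (hρ : 0 ≤ ρ)
    (G : SimpleGraph (Fin m)) (c : Sym2 (Fin m) → ℕ)
    (hc : ∑ v, (colorsAt G c v : ℝ) ≤ ρ * m + k) (hG : ¬hasMonoClique G c s) :
    #G.edgeFinset ≤ RTmean m s ρ + k * m := by
  obtain ⟨S, hSk, hS⟩ := exists_card_le_sum_compl_le (colorsAt G c) k (by positivity) hc
  have hcS : ∑ v, (colorsAt (deleteIncident G S) c v : ℝ) ≤ ρ * m :=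
    le_trans (by exact_mod_cast sum_colorsAt_deleteIncident_le c G S) hS
  have hRT := card_edgeFinset_le_RTmean _ c hcS fun h =>
    hG (hasMonoClique_mono (deleteIncident_le G S) h)
  calc #G.edgeFinset ≤ #(deleteIncident G S).edgeFinset + #S * m := by
        simpa using card_edgeFinset_le_deleteIncident G S
    _ ≤ RTmean m s ρ + k * m := by gcongr

theorem adjust_lemma_general (s : ℕ) (ρ : ℝ) (hρ : 1 ≤ ρ) (ε : ℝ) (hε : 0 < ε) :
    ∃ α : ℝ, 0 < α ∧ ∃ M : ℕ, ∀ m : ℕ, M ≤ m →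
      ∀ (G : SimpleGraph (Fin m)) (c : Sym2 (Fin m) → ℕ),
        (RTmean m s ρ : ℝ) + ε * m ^ 2 / 4 < (G.edgeFinset.card : ℝ) →
        (∑ v, (colorsAt G c v : ℝ)) ≤ (ρ + α) * m →
        hasMonoClique G c s := by
  refine ⟨ε / 8, by positivity, ⌈8 / ε⌉₊ + 1, fun m hm G c hedge hc => ?_⟩
  by_contra hG
  have hεm : 8 < ε * m := by
    have := Nat.lt_of_ceil_lt (Nat.lt_of_succ_le hm)
    rwa [div_lt_iff₀ hε, mul_comm] at this
  set k := ⌈ε / 8 * m⌉₊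
  have hk : (k : ℝ) < ε / 8 * m + 1 := Nat.ceil_lt_add_one (by positivity)
  have hE : (#G.edgeFinset : ℝ) ≤ RTmean m s ρ + k * m := by
    exact_mod_cast card_edgeFinset_le_RTmean_add (by linarith) G c
      (hc.trans (by nlinarith [Nat.le_ceil (ε / 8 * m)])) hG
  have hm0 : (0 : ℝ) < m := by nlinarith
  nlinarith

/-- For every `ε > 0` there is `α > 0` such that for all sufficiently large `m`,
every graph on `m` vertices with more than `RT(m, K_s, ρ-mean) + εm²/4` edges, equipped with a
`(ρ+α)`-mean edge coloring, contains a monochromatic `K_s`. -/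
theorem adjust_lemma (s : ℕ) (hs : 2 ≤ s) (ρ : ℝ) (hρ : 1 ≤ ρ) (ε : ℝ) (hε : 0 < ε) :
    ∃ α : ℝ, 0 < α ∧ ∃ M : ℕ, ∀ m : ℕ, M ≤ m →
      ∀ (G : SimpleGraph (Fin m)) (c : Sym2 (Fin m) → ℕ),
        (RTmean m s ρ : ℝ) + ε * m ^ 2 / 4 < (G.edgeFinset.card : ℝ) →
        (∑ v, (colorsAt G c v : ℝ)) ≤ (ρ + α) * m →
        hasMonoClique G c s :=
  adjust_lemma_general s ρ hρ ε hε
end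

section
/- Suppose an edge-colored graph G on n vertices has no monochromatic triangle and contains a spanning collection of vertex-disjoint cliques, each of size 3, 4 or 5, covering a vertex subset S of size |S| = d. Then Σ_{v∈S} c(v) ≥ (5/3)·d, where c(v) is the number of distinct colors incident to v in G. -/
set_option maxHeartbeats 1000000

open Finset
open scoped Classical

lemma two_le_card3 (x y z : ℕ) (h : ¬(x = y ∧ y = z)) :
    2 ≤ ({x, y, z} : Finset ℕ).card := by
  by_contra hc
  push_neg at hc
  have h0 : ({x, y, z} : Finset ℕ).card ≤ 1 := by omega
  have h1 := Finset.card_le_one.mp h0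
  simp only [Finset.mem_insert, Finset.mem_singleton] at h1
  exact h ⟨h1 x (by tauto) y (by tauto), h1 y (by tauto) z (by tauto)⟩

lemma two_le_card4 (w x y z : ℕ) (h : ¬(w = x ∧ x = y ∧ y = z)) :
    2 ≤ ({w, x, y, z} : Finset ℕ).card := by
  by_contra hc
  push_neg at hc
  have h0 : ({w, x, y, z} : Finset ℕ).card ≤ 1 := by omega
  have h1 := Finset.card_le_one.mp h0
  simp only [Finset.mem_insert, Finset.mem_singleton] at h1
  exact h ⟨h1 w (by tauto) x (by tauto), h1 x (by tauto) y (by tauto), h1 y (by tauto) z (by tauto)⟩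

lemma one_le_card3 (x y z : ℕ) : 1 ≤ ({x, y, z} : Finset ℕ).card :=
  Finset.card_pos.mpr ⟨x, by simp⟩

lemma one_le_card4 (w x y z : ℕ) : 1 ≤ ({w, x, y, z} : Finset ℕ).card :=
  Finset.card_pos.mpr ⟨w, by simp⟩

lemma tri5 (p q r : ℕ) (h : ¬(p = q ∧ q = r)) :
    5 ≤ ({p, q} : Finset ℕ).card + ({p, r} : Finset ℕ).card + ({q, r} : Finset ℕ).card := by
  by_cases h1 : p = q <;> by_cases h2 : p = r <;> by_cases h3 : q = r <;>
    simp_all [Finset.card_insert_of_notMem, Finset.mem_singleton] <;> omega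

lemma card_pair_succ (α x y : ℕ) (s : Finset ℕ) (hsub : insert α {x, y} ⊆ s)
    (hx : x ≠ α) (hy : y ≠ α) : 1 + ({x, y} : Finset ℕ).card ≤ s.card := by
  have : (insert α ({x, y} : Finset ℕ)).card = 1 + ({x, y} : Finset ℕ).card := by
    rw [Finset.card_insert_of_notMem (by simp [Ne.symm hx, Ne.symm hy])]
    omega
  rw [← this]
  exact Finset.card_le_card hsub

lemma k4sum (p q r s t u : ℕ)
    (habc : ¬(p = q ∧ q = s)) (habd : ¬(p = r ∧ r = t))
    (hacd : ¬(q = r ∧ r = u)) (hbcd : ¬(s = t ∧ t = u)) :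
    7 ≤ ({p, q, r} : Finset ℕ).card + ({p, s, t} : Finset ℕ).card
      + ({q, s, u} : Finset ℕ).card + ({r, t, u} : Finset ℕ).card := by
  have o1 := one_le_card3 p q r
  have o2 := one_le_card3 p s t
  have o3 := one_le_card3 q s u
  have o4 := one_le_card3 r t u
  by_cases hMa : p = q ∧ q = r
  · have b2 := two_le_card3 p s t (by omega)
    have b3 := two_le_card3 q s u (by omega)
    have b4 := two_le_card3 r t u (by omega)
    omega
  · by_cases hMb : p = s ∧ s = t
    · have b1 := two_le_card3 p q r (by omega)
      have b3 := two_le_card3 q s u (by omega)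
      have b4 := two_le_card3 r t u (by omega)
      omega
    · by_cases hMc : q = s ∧ s = u
      · have b1 := two_le_card3 p q r (by omega)
        have b2 := two_le_card3 p s t (by omega)
        have b4 := two_le_card3 r t u (by omega)
        omega
      · by_cases hMd : r = t ∧ t = u
        · have b1 := two_le_card3 p q r (by omega)
          have b2 := two_le_card3 p s t (by omega)
          have b3 := two_le_card3 q s u (by omega)
          omega
        · have b1 := two_le_card3 p q r (by omega)
          have b2 := two_le_card3 p s t (by omega)
          have b3 := two_le_card3 q s u (by omega)
          have b4 := two_le_card3 r t u (by omega)
          omega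


lemma k5sum (a12 a13 a14 a15 a23 a24 a25 a34 a35 a45 : ℕ)
    (h123 : ¬(a12 = a13 ∧ a13 = a23)) (h124 : ¬(a12 = a14 ∧ a14 = a24))
    (h125 : ¬(a12 = a15 ∧ a15 = a25)) (h134 : ¬(a13 = a14 ∧ a14 = a34))
    (h135 : ¬(a13 = a15 ∧ a15 = a35)) (h145 : ¬(a14 = a15 ∧ a15 = a45))
    (h234 : ¬(a23 = a24 ∧ a24 = a34)) (h235 : ¬(a23 = a25 ∧ a25 = a35))
    (h245 : ¬(a24 = a25 ∧ a25 = a45)) (h345 : ¬(a34 = a35 ∧ a35 = a45)) :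
    9 ≤ ({a12, a13, a14, a15} : Finset ℕ).card + ({a12, a23, a24, a25} : Finset ℕ).card
      + ({a13, a23, a34, a35} : Finset ℕ).card + ({a14, a24, a34, a45} : Finset ℕ).card
      + ({a15, a25, a35, a45} : Finset ℕ).card := by
  by_cases M1 : a12 = a13 ∧ a13 = a14 ∧ a14 = a15
  · obtain ⟨e1, e2, e3⟩ := M1
    have n23 : a23 ≠ a12 := fun h => h123 ⟨e1, e1.symm.trans h.symm⟩
    have n24 : a24 ≠ a12 := fun h => h124 ⟨e1.trans e2, (e1.trans e2).symm.trans h.symm⟩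
    have n25 : a25 ≠ a12 := fun h =>
      h125 ⟨e1.trans (e2.trans e3), (e1.trans (e2.trans e3)).symm.trans h.symm⟩
    have n34 : a34 ≠ a12 := fun h => h134 ⟨e2, e2.symm.trans (e1.symm.trans h.symm)⟩
    have n35 : a35 ≠ a12 := fun h =>
      h135 ⟨e2.trans e3, (e2.trans e3).symm.trans (e1.symm.trans h.symm)⟩
    have n45 : a45 ≠ a12 := fun h =>
      h145 ⟨e3, e3.symm.trans ((e1.trans e2).symm.trans h.symm)⟩
    have t := tri5 a34 a35 a45 h345
    have o1 := one_le_card4 a12 a13 a14 a15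
    clear h123 h124 h125 h134 h135 h145 h234 h235 h245 h345
    have b2 := two_le_card4 a12 a23 a24 a25 (fun hc => n23 hc.1.symm)
    have b3 := card_pair_succ a12 a34 a35 {a13, a23, a34, a35}
      (by intro k hk; simp at hk ⊢; omega) n34 n35
    have b4 := card_pair_succ a12 a34 a45 {a14, a24, a34, a45}
      (by intro k hk; simp at hk ⊢; omega) n34 n45
    have b5 := card_pair_succ a12 a35 a45 {a15, a25, a35, a45}
      (by intro k hk; simp at hk ⊢; omega) n35 n45
    omega
  · by_cases M2 : a12 = a23 ∧ a23 = a24 ∧ a24 = a25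
    · obtain ⟨e1, e2, e3⟩ := M2
      have n13 : a13 ≠ a12 := fun h => h123 ⟨h.symm, h.trans e1⟩
      have n34 : a34 ≠ a12 := fun h => h234 ⟨e2, (e1.trans e2).symm.trans h.symm⟩
      have n35 : a35 ≠ a12 := fun h =>
        h235 ⟨e2.trans e3, (e1.trans (e2.trans e3)).symm.trans h.symm⟩
      have n45 : a45 ≠ a12 := fun h =>
        h245 ⟨e3, (e1.trans (e2.trans e3)).symm.trans h.symm⟩
      have t := tri5 a34 a35 a45 h345
      have o2 := one_le_card4 a12 a23 a24 a25
      clear h123 h124 h125 h134 h135 h145 h234 h235 h245 h345 M1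
      have b1 := two_le_card4 a12 a13 a14 a15 (fun hc => n13 hc.1.symm)
      have b3 := card_pair_succ a12 a34 a35 {a13, a23, a34, a35}
        (by intro k hk; simp at hk ⊢; omega) n34 n35
      have b4 := card_pair_succ a12 a34 a45 {a14, a24, a34, a45}
        (by intro k hk; simp at hk ⊢; omega) n34 n45
      have b5 := card_pair_succ a12 a35 a45 {a15, a25, a35, a45}
        (by intro k hk; simp at hk ⊢; omega) n35 n45
      omega
    · by_cases M3 : a13 = a23 ∧ a23 = a34 ∧ a34 = a35
      · obtain ⟨e1, e2, e3⟩ := M3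
        have n12 : a12 ≠ a13 := fun h => h123 ⟨h, e1⟩
        have n14 : a14 ≠ a13 := fun h => h134 ⟨h.symm, h.trans (e1.trans e2)⟩
        have n15 : a15 ≠ a13 := fun h => h135 ⟨h.symm, h.trans (e1.trans (e2.trans e3))⟩
        have n24 : a24 ≠ a13 := fun h => h234 ⟨e1.symm.trans h.symm, h.trans (e1.trans e2)⟩
        have t := tri5 a12 a14 a24 h124
        have o3 := one_le_card4 a13 a23 a34 a35
        have b5 := two_le_card4 a15 a25 a35 a45
          (fun hc => n15 (hc.1.trans (hc.2.1.trans (e1.trans (e2.trans e3)).symm)))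
        clear h123 h124 h125 h134 h135 h145 h234 h235 h245 h345 M1 M2
        have b1 := card_pair_succ a13 a12 a14 {a12, a13, a14, a15}
          (by intro k hk; simp at hk ⊢; omega) n12 n14
        have b2 := card_pair_succ a13 a12 a24 {a12, a23, a24, a25}
          (by intro k hk; simp at hk ⊢; omega) n12 n24
        have b4 := card_pair_succ a13 a14 a24 {a14, a24, a34, a45}
          (by intro k hk; simp at hk ⊢; omega) n14 n24
        omega
      · by_cases M4 : a14 = a24 ∧ a24 = a34 ∧ a34 = a45
        · obtain ⟨e1, e2, e3⟩ := M4
          have n12 : a12 ≠ a14 := fun h => h124 ⟨h, e1⟩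
          have n13 : a13 ≠ a14 := fun h => h134 ⟨h, e1.trans e2⟩
          have n15 : a15 ≠ a14 := fun h =>
            h145 ⟨h.symm, h.trans (e1.trans (e2.trans e3))⟩
          have n23 : a23 ≠ a14 := fun h => h234 ⟨h.trans e1, e2⟩
          have t := tri5 a12 a13 a23 h123
          have o4 := one_le_card4 a14 a24 a34 a45
          have b5 := two_le_card4 a15 a25 a35 a45
            (fun hc => n15 ((hc.1.trans (hc.2.1.trans hc.2.2)).trans
              (e1.trans (e2.trans e3)).symm))
          clear h123 h124 h125 h134 h135 h145 h234 h235 h245 h345 M1 M2 M3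
          have b1 := card_pair_succ a14 a12 a13 {a12, a13, a14, a15}
            (by intro k hk; simp at hk ⊢; omega) n12 n13
          have b2 := card_pair_succ a14 a12 a23 {a12, a23, a24, a25}
            (by intro k hk; simp at hk ⊢; omega) n12 n23
          have b3 := card_pair_succ a14 a13 a23 {a13, a23, a34, a35}
            (by intro k hk; simp at hk ⊢; omega) n13 n23
          omega
        · by_cases M5 : a15 = a25 ∧ a25 = a35 ∧ a35 = a45
          · obtain ⟨e1, e2, e3⟩ := M5
            have n12 : a12 ≠ a15 := fun h => h125 ⟨h, e1⟩
            have n13 : a13 ≠ a15 := fun h => h135 ⟨h, e1.trans e2⟩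
            have n14 : a14 ≠ a15 := fun h => h145 ⟨h, e1.trans (e2.trans e3)⟩
            have n23 : a23 ≠ a15 := fun h => h235 ⟨h.trans e1, e2⟩
            have t := tri5 a12 a13 a23 h123
            have o5 := one_le_card4 a15 a25 a35 a45
            have b4 := two_le_card4 a14 a24 a34 a45
              (fun hc => n14 ((hc.1.trans (hc.2.1.trans hc.2.2)).trans
                (e1.trans (e2.trans e3)).symm))
            clear h123 h124 h125 h134 h135 h145 h234 h235 h245 h345 M1 M2 M3 M4
            have b1 := card_pair_succ a15 a12 a13 {a12, a13, a14, a15}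
              (by intro k hk; simp at hk ⊢; omega) n12 n13
            have b2 := card_pair_succ a15 a12 a23 {a12, a23, a24, a25}
              (by intro k hk; simp at hk ⊢; omega) n12 n23
            have b3 := card_pair_succ a15 a13 a23 {a13, a23, a34, a35}
              (by intro k hk; simp at hk ⊢; omega) n13 n23
            omega
          · have b1 := two_le_card4 a12 a13 a14 a15 M1
            have b2 := two_le_card4 a12 a23 a24 a25 M2
            have b3 := two_le_card4 a13 a23 a34 a35 M3
            have b4 := two_le_card4 a14 a24 a34 a45 M4
            have b5 := two_le_card4 a15 a25 a35 a45 M5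
            omega

lemma colorsAt_ge {V : Type*} [Fintype V] (G : SimpleGraph V) (c : Sym2 V → ℕ)
    (v : V) (E : Finset (Sym2 V)) (hE : ∀ e ∈ E, ∃ w, G.Adj v w ∧ e = s(v, w)) :
    (E.image c).card ≤ colorsAt G c v := by
  unfold colorsAt
  apply Finset.card_le_card
  apply Finset.image_subset_image
  intro e he
  obtain ⟨w, hadj, rfl⟩ := hE e he
  rw [SimpleGraph.mem_incidenceFinset]
  exact G.mk'_mem_incidenceSet_left_iff.mpr hadj

lemma star2 {V : Type*} [Fintype V] (G : SimpleGraph V) (c : Sym2 V → ℕ)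
    (v w u : V) (hvw : G.Adj v w) (hvu : G.Adj v u) :
    ({c s(v, w), c s(v, u)} : Finset ℕ).card ≤ colorsAt G c v := by
  have himg : (({s(v, w), s(v, u)} : Finset (Sym2 V)).image c)
      = {c s(v, w), c s(v, u)} := by simp
  rw [← himg]
  apply colorsAt_ge
  intro e he
  simp only [Finset.mem_insert, Finset.mem_singleton] at he
  rcases he with rfl | rfl
  · exact ⟨w, hvw, rfl⟩
  · exact ⟨u, hvu, rfl⟩

lemma star3 {V : Type*} [Fintype V] (G : SimpleGraph V) (c : Sym2 V → ℕ)
    (v w u t : V) (hvw : G.Adj v w) (hvu : G.Adj v u) (hvt : G.Adj v t) :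
    ({c s(v, w), c s(v, u), c s(v, t)} : Finset ℕ).card ≤ colorsAt G c v := by
  have himg : (({s(v, w), s(v, u), s(v, t)} : Finset (Sym2 V)).image c)
      = {c s(v, w), c s(v, u), c s(v, t)} := by simp
  rw [← himg]
  apply colorsAt_ge
  intro e he
  simp only [Finset.mem_insert, Finset.mem_singleton] at he
  rcases he with rfl | rfl | rfl
  · exact ⟨w, hvw, rfl⟩
  · exact ⟨u, hvu, rfl⟩
  · exact ⟨t, hvt, rfl⟩

lemma star4 {V : Type*} [Fintype V] (G : SimpleGraph V) (c : Sym2 V → ℕ)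
    (v w u t r : V) (hvw : G.Adj v w) (hvu : G.Adj v u) (hvt : G.Adj v t)
    (hvr : G.Adj v r) :
    ({c s(v, w), c s(v, u), c s(v, t), c s(v, r)} : Finset ℕ).card ≤ colorsAt G c v := by
  have himg : (({s(v, w), s(v, u), s(v, t), s(v, r)} : Finset (Sym2 V)).image c)
      = {c s(v, w), c s(v, u), c s(v, t), c s(v, r)} := by simp
  rw [← himg]
  apply colorsAt_ge
  intro e he
  simp only [Finset.mem_insert, Finset.mem_singleton] at he
  rcases he with rfl | rfl | rfl | rfl
  · exact ⟨w, hvw, rfl⟩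
  · exact ⟨u, hvu, rfl⟩
  · exact ⟨t, hvt, rfl⟩
  · exact ⟨r, hvr, rfl⟩

lemma bound3 {V : Type*} [Fintype V] (G : SimpleGraph V) (c : Sym2 V → ℕ)
    (hno : ¬ hasMonoTriangle G c) (x y z : V)
    (axy : G.Adj x y) (axz : G.Adj x z) (ayz : G.Adj y z) :
    5 ≤ colorsAt G c x + colorsAt G c y + colorsAt G c z := by
  have sw : ∀ a b : V, c s(a, b) = c s(b, a) := fun a b => congrArg c Sym2.eq_swap
  have bx := star2 G c x y z axy axz
  have by' := star2 G c y x z axy.symm ayz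
  have bz := star2 G c z x y axz.symm ayz.symm
  rw [sw y x] at by'
  rw [sw z x, sw z y] at bz
  have t := tri5 (c s(x, y)) (c s(x, z)) (c s(y, z))
    (fun h => hno ⟨x, y, z, axy, axz, ayz, h.1, h.2⟩)
  omega

lemma bound4 {V : Type*} [Fintype V] (G : SimpleGraph V) (c : Sym2 V → ℕ)
    (hno : ¬ hasMonoTriangle G c) (w x y z : V)
    (awx : G.Adj w x) (awy : G.Adj w y) (awz : G.Adj w z)
    (axy : G.Adj x y) (axz : G.Adj x z) (ayz : G.Adj y z) :
    7 ≤ colorsAt G c w + colorsAt G c x + colorsAt G c y + colorsAt G c z := by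
  have sw : ∀ a b : V, c s(a, b) = c s(b, a) := fun a b => congrArg c Sym2.eq_swap
  have bw := star3 G c w x y z awx awy awz
  have bx := star3 G c x w y z awx.symm axy axz
  have by' := star3 G c y w x z awy.symm axy.symm ayz
  have bz := star3 G c z w x y awz.symm axz.symm ayz.symm
  rw [sw x w] at bx
  rw [sw y w, sw y x] at by'
  rw [sw z w, sw z x, sw z y] at bz
  have t := k4sum (c s(w, x)) (c s(w, y)) (c s(w, z)) (c s(x, y)) (c s(x, z)) (c s(y, z))
    (fun h => hno ⟨w, x, y, awx, awy, axy, h.1, h.2⟩)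
    (fun h => hno ⟨w, x, z, awx, awz, axz, h.1, h.2⟩)
    (fun h => hno ⟨w, y, z, awy, awz, ayz, h.1, h.2⟩)
    (fun h => hno ⟨x, y, z, axy, axz, ayz, h.1, h.2⟩)
  omega

lemma bound5 {V : Type*} [Fintype V] (G : SimpleGraph V) (c : Sym2 V → ℕ)
    (hno : ¬ hasMonoTriangle G c) (v1 v2 v3 v4 v5 : V)
    (a12 : G.Adj v1 v2) (a13 : G.Adj v1 v3) (a14 : G.Adj v1 v4) (a15 : G.Adj v1 v5)
    (a23 : G.Adj v2 v3) (a24 : G.Adj v2 v4) (a25 : G.Adj v2 v5)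
    (a34 : G.Adj v3 v4) (a35 : G.Adj v3 v5) (a45 : G.Adj v4 v5) :
    9 ≤ colorsAt G c v1 + colorsAt G c v2 + colorsAt G c v3
      + colorsAt G c v4 + colorsAt G c v5 := by
  have sw : ∀ a b : V, c s(a, b) = c s(b, a) := fun a b => congrArg c Sym2.eq_swap
  have b1 := star4 G c v1 v2 v3 v4 v5 a12 a13 a14 a15
  have b2 := star4 G c v2 v1 v3 v4 v5 a12.symm a23 a24 a25
  have b3 := star4 G c v3 v1 v2 v4 v5 a13.symm a23.symm a34 a35
  have b4 := star4 G c v4 v1 v2 v3 v5 a14.symm a24.symm a34.symm a45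
  have b5 := star4 G c v5 v1 v2 v3 v4 a15.symm a25.symm a35.symm a45.symm
  rw [sw v2 v1] at b2
  rw [sw v3 v1, sw v3 v2] at b3
  rw [sw v4 v1, sw v4 v2, sw v4 v3] at b4
  rw [sw v5 v1, sw v5 v2, sw v5 v3, sw v5 v4] at b5
  have t := k5sum (c s(v1, v2)) (c s(v1, v3)) (c s(v1, v4)) (c s(v1, v5))
    (c s(v2, v3)) (c s(v2, v4)) (c s(v2, v5)) (c s(v3, v4)) (c s(v3, v5)) (c s(v4, v5))
    (fun h => hno ⟨v1, v2, v3, a12, a13, a23, h.1, h.2⟩)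
    (fun h => hno ⟨v1, v2, v4, a12, a14, a24, h.1, h.2⟩)
    (fun h => hno ⟨v1, v2, v5, a12, a15, a25, h.1, h.2⟩)
    (fun h => hno ⟨v1, v3, v4, a13, a14, a34, h.1, h.2⟩)
    (fun h => hno ⟨v1, v3, v5, a13, a15, a35, h.1, h.2⟩)
    (fun h => hno ⟨v1, v4, v5, a14, a15, a45, h.1, h.2⟩)
    (fun h => hno ⟨v2, v3, v4, a23, a24, a34, h.1, h.2⟩)
    (fun h => hno ⟨v2, v3, v5, a23, a25, a35, h.1, h.2⟩)
    (fun h => hno ⟨v2, v4, v5, a24, a25, a45, h.1, h.2⟩)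
    (fun h => hno ⟨v3, v4, v5, a34, a35, a45, h.1, h.2⟩)
  omega

lemma clique_bound {V : Type*} [Fintype V] (G : SimpleGraph V) (c : Sym2 V → ℕ)
    (hno : ¬ hasMonoTriangle G c) (A : Finset V) (hclq : G.IsClique (A : Set V))
    (hcard : A.card = 3 ∨ A.card = 4 ∨ A.card = 5) :
    (5 : ℝ) / 3 * (A.card : ℝ) ≤ ∑ v ∈ A, (colorsAt G c v : ℝ) := by
  rcases hcard with h3 | h4 | h5
  · obtain ⟨x, y, z, hxy, hxz, hyz, rfl⟩ := Finset.card_eq_three.mp h3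
    have axy : G.Adj x y := hclq (by simp) (by simp) hxy
    have axz : G.Adj x z := hclq (by simp) (by simp) hxz
    have ayz : G.Adj y z := hclq (by simp) (by simp) hyz
    have hb := bound3 G c hno x y z axy axz ayz
    rw [h3, Finset.sum_insert (by simp [hxy, hxz]), Finset.sum_insert (by simp [hyz]),
      Finset.sum_singleton]
    have : (5 : ℝ) ≤ (colorsAt G c x : ℝ) + (colorsAt G c y : ℝ) + (colorsAt G c z : ℝ) := by
      exact_mod_cast hb
    linarith
  · obtain ⟨w, T, hwT, rfl, hT⟩ := Finset.card_eq_succ.mp (show _ = 3 + 1 from h4)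
    obtain ⟨x, y, z, hxy, hxz, hyz, rfl⟩ := Finset.card_eq_three.mp hT
    have hw' : w ≠ x ∧ w ≠ y ∧ w ≠ z := by
      simpa using hwT
    obtain ⟨hwx, hwy, hwz⟩ := hw'
    have awx : G.Adj w x := hclq (by simp) (by simp) hwx
    have awy : G.Adj w y := hclq (by simp) (by simp) hwy
    have awz : G.Adj w z := hclq (by simp) (by simp) hwz
    have axy : G.Adj x y := hclq (by simp) (by simp) hxy
    have axz : G.Adj x z := hclq (by simp) (by simp) hxz
    have ayz : G.Adj y z := hclq (by simp) (by simp) hyz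
    have hb := bound4 G c hno w x y z awx awy awz axy axz ayz
    rw [h4, Finset.sum_insert hwT, Finset.sum_insert (by simp [hxy, hxz]),
      Finset.sum_insert (by simp [hyz]), Finset.sum_singleton]
    have : (7 : ℝ) ≤ (colorsAt G c w : ℝ) + (colorsAt G c x : ℝ)
        + (colorsAt G c y : ℝ) + (colorsAt G c z : ℝ) := by exact_mod_cast hb
    linarith
  · obtain ⟨v1, T1, h1, rfl, hT1⟩ := Finset.card_eq_succ.mp (show _ = 4 + 1 from h5)
    obtain ⟨v2, T2, h2, rfl, hT2⟩ := Finset.card_eq_succ.mp (show _ = 3 + 1 from hT1)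
    obtain ⟨x, y, z, hxy, hxz, hyz, rfl⟩ := Finset.card_eq_three.mp hT2
    have h1' : v1 ≠ v2 ∧ v1 ≠ x ∧ v1 ≠ y ∧ v1 ≠ z := by simpa using h1
    obtain ⟨n12, n1x, n1y, n1z⟩ := h1'
    have h2' : v2 ≠ x ∧ v2 ≠ y ∧ v2 ≠ z := by simpa using h2
    obtain ⟨n2x, n2y, n2z⟩ := h2'
    have a12 : G.Adj v1 v2 := hclq (by simp) (by simp) n12
    have a1x : G.Adj v1 x := hclq (by simp) (by simp) n1x
    have a1y : G.Adj v1 y := hclq (by simp) (by simp) n1y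
    have a1z : G.Adj v1 z := hclq (by simp) (by simp) n1z
    have a2x : G.Adj v2 x := hclq (by simp) (by simp) n2x
    have a2y : G.Adj v2 y := hclq (by simp) (by simp) n2y
    have a2z : G.Adj v2 z := hclq (by simp) (by simp) n2z
    have axy : G.Adj x y := hclq (by simp) (by simp) hxy
    have axz : G.Adj x z := hclq (by simp) (by simp) hxz
    have ayz : G.Adj y z := hclq (by simp) (by simp) hyz
    have hb := bound5 G c hno v1 v2 x y z a12 a1x a1y a1z a2x a2y a2z axy axz ayz
    rw [h5, Finset.sum_insert h1, Finset.sum_insert h2,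
      Finset.sum_insert (by simp [hxy, hxz]), Finset.sum_insert (by simp [hyz]),
      Finset.sum_singleton]
    have : (9 : ℝ) ≤ (colorsAt G c v1 : ℝ) + (colorsAt G c v2 : ℝ) + (colorsAt G c x : ℝ)
        + (colorsAt G c y : ℝ) + (colorsAt G c z : ℝ) := by exact_mod_cast hb
    linarith

/-- If an edge-colored graph has no monochromatic triangle and a set `S` of
vertices is partitioned into vertex-disjoint cliques of sizes 3, 4 or 5, then the total
number of incident colors over `S` is at least `(5/3)·|S|`. -/
theorem clique_factor_color_sum {V : Type*} [Fintype V] (G : SimpleGraph V)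
    (c : Sym2 V → ℕ) (hno : ¬ hasMonoTriangle G c)
    (S : Finset V) (P : Finset (Finset V))
    (hcl : ∀ A ∈ P, G.IsClique (A : Set V) ∧ (A.card = 3 ∨ A.card = 4 ∨ A.card = 5))
    (hdisj : (P : Set (Finset V)).PairwiseDisjoint id)
    (hcover : P.biUnion id = S) :
    (5 : ℝ) / 3 * (S.card : ℝ) ≤ ∑ v ∈ S, (colorsAt G c v : ℝ) := by
  have hc : ((P.biUnion id).card : ℝ) = ∑ A ∈ P, (A.card : ℝ) := by
    rw [Finset.card_biUnion
      (fun A hA B hB hAB => hdisj (Finset.mem_coe.mpr hA) (Finset.mem_coe.mpr hB) hAB)]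
    push_cast
    rfl
  rw [← hcover, hc, Finset.sum_biUnion hdisj, Finset.mul_sum]
  exact Finset.sum_le_sum (fun A hA => clique_bound G c hno A (hcl A hA).1 (hcl A hA).2)
end

section
/- Let G be an edge-colored graph on n ≥ 6 vertices with t(n,5)+1 edges, minimum degree greater than 3n/5, such that every vertex incident to at least 2 colors has degree greater than 4n/5, and suppose some vertex v is incident to exactly one color with 3n/5 < deg(v) ≤ 4n/5. If G has no monochromatic triangle, then every neighbor w of v satisfies c(w) ≥ 2, and the induced subgraph G[N(v)] has minimum degree greater than 2|N(v)|/3. -/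
open Finset
open scoped Classical

lemma mono_of_colors_le_one {V : Type*} [Fintype V] (G : SimpleGraph V)
    (c : Sym2 V → ℕ) (v : V) (h : colorsAt G c v ≤ 1) :
    ∀ e₁ ∈ G.incidenceFinset v, ∀ e₂ ∈ G.incidenceFinset v, c e₁ = c e₂ := by
  intro e₁ h₁ e₂ h₂
  exact Finset.card_le_one.mp h (c e₁) (Finset.mem_image_of_mem c h₁)
    (c e₂) (Finset.mem_image_of_mem c h₂)

/-- In an edge-colored graph on `n ≥ 6` vertices with `t(n,5)+1` edges, minimum
degree greater than `3n/5`, in which every vertex incident to at least 2 colors has degree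
greater than `4n/5`, if `v` is incident to exactly one color and `3n/5 < deg(v) ≤ 4n/5` and
there is no monochromatic triangle, then every neighbor of `v` is incident to at least 2
colors, and `G[N(v)]` has minimum degree greater than `2|N(v)|/3`. -/
theorem neighborhood_structure {V : Type*} [Fintype V] (G : SimpleGraph V)
    (c : Sym2 V → ℕ) (n : ℕ) (hn : Fintype.card V = n) (h6 : 6 ≤ n)
    (he : G.edgeFinset.card = 2 * n ^ 2 / 5 + 1)
    (hmin : ∀ u : V, (3 * n : ℝ) / 5 < (G.degree u : ℝ))
    (hbig : ∀ u : V, 2 ≤ colorsAt G c u → (4 * n : ℝ) / 5 < (G.degree u : ℝ))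
    (v : V) (hv1 : colorsAt G c v = 1)
    (hvlo : (3 * n : ℝ) / 5 < (G.degree v : ℝ))
    (hvhi : (G.degree v : ℝ) ≤ (4 * n : ℝ) / 5)
    (hno : ¬ hasMonoTriangle G c) :
    (∀ w ∈ G.neighborFinset v, 2 ≤ colorsAt G c w) ∧
    (∀ w ∈ G.neighborFinset v,
      (2 * (G.neighborFinset v).card : ℝ) / 3 <
        (((G.neighborFinset v).filter (fun u => G.Adj w u)).card : ℝ)) := by
  have hnpos : (0 : ℝ) < n := by positivity
  -- inclusion-exclusion lower bound for intersections of neighborhoods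
  have hinter : ∀ a b : V,
      ((G.degree a : ℝ) + G.degree b - n : ℝ)
        ≤ ((G.neighborFinset a ∩ G.neighborFinset b).card : ℝ) := by
    intro a b
    have h1 := Finset.card_inter_add_card_union (G.neighborFinset a) (G.neighborFinset b)
    have h2 : (G.neighborFinset a ∪ G.neighborFinset b).card ≤ n := by
      rw [← hn]; exact Finset.card_le_univ _
    have := G.card_neighborFinset_eq_degree a
    have := G.card_neighborFinset_eq_degree b
    have h1' : (G.degree a : ℝ) + G.degree b =
        ((G.neighborFinset a ∩ G.neighborFinset b).card : ℝ)
          + ((G.neighborFinset a ∪ G.neighborFinset b).card : ℝ) := by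
      rw [← Nat.cast_add, ← Nat.cast_add, ← SimpleGraph.card_neighborFinset_eq_degree,
        ← SimpleGraph.card_neighborFinset_eq_degree, h1]
    have h2' : ((G.neighborFinset a ∪ G.neighborFinset b).card : ℝ) ≤ n :=
      by exact_mod_cast h2
    linarith
  have part1 : ∀ w ∈ G.neighborFinset v, 2 ≤ colorsAt G c w := by
    intro w hw
    rw [SimpleGraph.mem_neighborFinset] at hw
    by_contra hlt
    push_neg at hlt
    have hwmono := mono_of_colors_le_one G c w (Nat.lt_succ_iff.mp hlt)
    have hvmono := mono_of_colors_le_one G c v (le_of_eq hv1)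
    -- common neighbor
    have hcard : (0 : ℝ) < ((G.neighborFinset v ∩ G.neighborFinset w).card : ℝ) := by
      have := hinter v w
      have := hmin w
      linarith
    obtain ⟨x, hx⟩ := Finset.card_pos.mp (by exact_mod_cast hcard)
    rw [Finset.mem_inter, SimpleGraph.mem_neighborFinset, SimpleGraph.mem_neighborFinset] at hx
    apply hno
    refine ⟨v, w, x, hw, hx.1, hx.2, ?_, ?_⟩
    · apply hvmono <;> rw [SimpleGraph.mem_incidenceFinset]
      · exact (G.mk'_mem_incidenceSet_left_iff).mpr hw
      · exact (G.mk'_mem_incidenceSet_left_iff).mpr hx.1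
    · have e1 : c s(w, v) = c s(w, x) := by
        apply hwmono <;> rw [SimpleGraph.mem_incidenceFinset]
        · exact (G.mk'_mem_incidenceSet_left_iff).mpr hw.symm
        · exact (G.mk'_mem_incidenceSet_left_iff).mpr hx.2
      have e2 : c s(v, x) = c s(v, w) := by
        apply hvmono <;> rw [SimpleGraph.mem_incidenceFinset]
        · exact (G.mk'_mem_incidenceSet_left_iff).mpr hx.1
        · exact (G.mk'_mem_incidenceSet_left_iff).mpr hw
      rw [e2, Sym2.eq_swap, e1]
  refine ⟨part1, ?_⟩
  intro w hw
  have hdw : (4 * n : ℝ) / 5 < (G.degree w : ℝ) := hbig w (part1 w hw)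
  have hfilter : (G.neighborFinset v).filter (fun u => G.Adj w u)
      = G.neighborFinset v ∩ G.neighborFinset w := by
    ext u
    simp [SimpleGraph.mem_neighborFinset, and_comm]
  rw [hfilter]
  have := hinter v w
  have hdv : ((G.neighborFinset v).card : ℝ) = G.degree v := by
    exact_mod_cast congrArg Nat.cast (G.card_neighborFinset_eq_degree v)
  rw [hdv]
  linarith
end

section
/- Let G be an n-vertex graph with e edges, edge-colored so that Σ_v c(v) ≤ ρn, with color classes of sizes c_1 ≥ c_2 ≥ ... ≥ c_q (so Σ c_i = e). If r ≥ 18ρ²/ε² and e ≥ n²/4, then c_1 + c_2 + ... + c_r ≥ e − εn²/2. -/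
/-!
A color class with `a` edges spans at least `√a` vertices, and adding up the numbers of vertices
spanned by the classes counts the pairs (vertex, color at it), so the spans total at most `ρn`.
Take the threshold `s = εn/(2ρ)`: at most `ρn/s = 2ρ²/ε` classes have more than `s²` edges, and a
smaller class has at most `s` edges per spanned vertex, so the smaller classes hold at most
`s·ρn = εn²/2` edges together. If `e > εn²/2` then `e ≤ n²/2` forces `ε < 1`, hence
`2ρ²/ε ≤ 18ρ²/ε²`; otherwise no color at all is needed.
-/

open Finset
open scoped Classical

section SquareRootCounting

variable {ι : Type*} (C : Finset ι) {a b : ι → ℝ} {s : ℝ}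

theorem card_filter_sq_lt_mul_le (hb : ∀ i ∈ C, 0 ≤ b i) (hab : ∀ i ∈ C, a i ≤ b i ^ 2) :
    #{i ∈ C | s ^ 2 < a i} * s ≤ ∑ i ∈ C, b i :=
  calc #{i ∈ C | s ^ 2 < a i} * s = ∑ i ∈ C with s ^ 2 < a i, s := by
        rw [sum_const, nsmul_eq_mul]
    _ ≤ ∑ i ∈ C with s ^ 2 < a i, b i := sum_le_sum fun i hi => by
        obtain ⟨hiC, hsa⟩ := mem_filter.1 hi
        exact (abs_le_of_sq_le_sq' (hsa.trans_le (hab i hiC)).le (hb i hiC)).2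
    _ ≤ ∑ i ∈ C, b i := sum_le_sum_of_subset_of_nonneg (filter_subset _ _) fun i hi _ => hb i hi

theorem sum_filter_le_sq_le_mul (hs : 0 ≤ s) (hb : ∀ i ∈ C, 0 ≤ b i)
    (hab : ∀ i ∈ C, a i ≤ b i ^ 2) :
    ∑ i ∈ C with a i ≤ s ^ 2, a i ≤ s * ∑ i ∈ C, b i :=
  calc ∑ i ∈ C with a i ≤ s ^ 2, a i ≤ ∑ i ∈ C with a i ≤ s ^ 2, s * b i :=
        sum_le_sum fun i hi => by
          obtain ⟨hiC, has⟩ := mem_filter.1 hi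
          have hab := hab i hiC
          have hb := hb i hiC
          rcases le_total s (b i) with h | h <;> nlinarith
    _ ≤ ∑ i ∈ C, s * b i :=
        sum_le_sum_of_subset_of_nonneg (filter_subset _ _) fun i hi _ => mul_nonneg hs (hb i hi)
    _ = s * ∑ i ∈ C, b i := (mul_sum _ _ _).symm

end SquareRootCounting

section ColorClasses

variable {α ι : Type*} [DecidableEq ι]

theorem card_filter_mem_eq_sum_card_fiber (E : Finset α) (c : α → ι) (R : Finset ι) :
    #{e ∈ E | c e ∈ R} = ∑ i ∈ R, #{e ∈ E | c e = i} := by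
  rw [card_eq_sum_card_fiberwise (s := {e ∈ E | c e ∈ R}) (f := c) (t := R)
    fun e he => (mem_filter.1 he).2]
  refine sum_congr rfl fun i hi => ?_
  rw [filter_filter]
  exact congrArg card (filter_congr fun e _ => ⟨And.right, fun h => ⟨h ▸ hi, h⟩⟩)

theorem exists_card_mul_le_and_card_sub_le_card_filter_mem {s : ℝ} (E : Finset α) (c : α → ι)
    (b : ι → ℝ) (hs : 0 ≤ s) (hb : ∀ i ∈ E.image c, 0 ≤ b i)
    (hcb : ∀ i ∈ E.image c, (#{e ∈ E | c e = i} : ℝ) ≤ b i ^ 2) :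
    ∃ R : Finset ι, #R * s ≤ ∑ i ∈ E.image c, b i ∧
      (#E : ℝ) - s * ∑ i ∈ E.image c, b i ≤ #{e ∈ E | c e ∈ R} := by
  set a : ι → ℝ := fun i => #{e ∈ E | c e = i}
  refine ⟨{i ∈ E.image c | s ^ 2 < a i}, card_filter_sq_lt_mul_le _ hb hcb, ?_⟩
  have hall : (#E : ℝ) = ∑ i ∈ E.image c, a i := by
    simp only [a]; exact_mod_cast card_eq_sum_card_image c E
  have hlarge : (#{e ∈ E | c e ∈ {i ∈ E.image c | s ^ 2 < a i}} : ℝ) =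
      ∑ i ∈ E.image c with s ^ 2 < a i, a i := by
    simp only [a]; exact_mod_cast card_filter_mem_eq_sum_card_fiber E c _
  have hsmall := sum_filter_le_sq_le_mul _ hs hb hcb
  rw [hall, hlarge, ← sum_filter_add_sum_filter_not _ (fun i => s ^ 2 < a i)]
  simp_rw [not_lt]
  linarith

end ColorClasses

section SpannedVertices

variable {V : Type*} [Fintype V]

noncomputable def spannedVerts (F : Finset (Sym2 V)) : Finset V :=
  {v | ∃ e ∈ F, v ∈ e}

theorem card_le_card_spannedVerts_sq (F : Finset (Sym2 V)) : #F ≤ #(spannedVerts F) ^ 2 := by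
  have hsub : F ⊆ (spannedVerts F).sym2 := fun e he =>
    mem_sym2_iff.2 fun v hv => by simpa [spannedVerts] using ⟨e, he, hv⟩
  calc #F ≤ (#(spannedVerts F) + 1).choose 2 := card_sym2 (spannedVerts F) ▸ card_le_card hsub
    _ ≤ #(spannedVerts F) ^ 2 := by
      rw [Nat.choose_two_right, Nat.add_sub_cancel]
      exact Nat.div_le_of_le_mul (by nlinarith)

theorem colorsAt_eq_card_filter (G : SimpleGraph V) (c : Sym2 V → ℕ) (v : V) :
    colorsAt G c v =
      #{i ∈ G.edgeFinset.image c | v ∈ spannedVerts {e ∈ G.edgeFinset | c e = i}} := by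
  unfold colorsAt
  congr 1
  ext i
  simp only [mem_image, mem_filter, G.incidenceFinset_eq_filter, spannedVerts, mem_univ, true_and]
  exact ⟨fun ⟨e, ⟨he, hv⟩, hi⟩ => ⟨⟨e, he, hi⟩, e, ⟨he, hi⟩, hv⟩,
    fun ⟨_, e, ⟨he, hi⟩, hv⟩ => ⟨e, ⟨he, hv⟩, hi⟩⟩

theorem sum_colorsAt_eq_sum_card_spannedVerts (G : SimpleGraph V) (c : Sym2 V → ℕ) :
    ∑ v, colorsAt G c v =
      ∑ i ∈ G.edgeFinset.image c, #(spannedVerts {e ∈ G.edgeFinset | c e = i}) := by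
  simp_rw [colorsAt_eq_card_filter]
  exact (sum_card_bipartiteAbove_eq_sum_card_bipartiteBelow
    (fun v i => v ∈ spannedVerts {e ∈ G.edgeFinset | c e = i})).trans (by simp [bipartiteBelow])

theorem card_edgeFinset_le_sq_div_two (G : SimpleGraph V) :
    (#G.edgeFinset : ℝ) ≤ Fintype.card V ^ 2 / 2 := by
  have h := G.card_edgeFinset_le_card_choose_two
  rw [← Nat.cast_le (α := ℝ), Nat.cast_choose_two] at h
  nlinarith [(Fintype.card V).cast_nonneg (α := ℝ)]

end SpannedVertices

theorem top_r_color_classes_general {V : Type*} [Fintype V] (G : SimpleGraph V)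
    (c : Sym2 V → ℕ) (n : ℕ) (hn : Fintype.card V = n)
    (ρ ε : ℝ) (hρ : 1 ≤ ρ) (hε : 0 < ε)
    (hmean : (∑ v, (colorsAt G c v : ℝ)) ≤ ρ * n)
    (r : ℕ) (hr : 18 * ρ ^ 2 / ε ^ 2 ≤ (r : ℝ)) :
    ∃ R : Finset ℕ, R.card ≤ r ∧
      (G.edgeFinset.card : ℝ) - ε * n ^ 2 / 2 ≤
        ((G.edgeFinset.filter (fun e => c e ∈ R)).card : ℝ) := by
  set E := G.edgeFinset
  by_cases hfew : (#E : ℝ) ≤ ε * n ^ 2 / 2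
  · exact ⟨∅, by simp, by linarith [(#{e ∈ E | c e ∈ (∅ : Finset ℕ)}).cast_nonneg (α := ℝ)]⟩
  have hE := hn ▸ card_edgeFinset_le_sq_div_two G
  have hn0 : (0 : ℝ) < n := by nlinarith
  have hε1 : ε < 1 := by nlinarith
  rw [← Nat.cast_sum, sum_colorsAt_eq_sum_card_spannedVerts, Nat.cast_sum] at hmean
  set s := ε * n / (2 * ρ)
  have hs2ρ : s * (2 * ρ) = ε * n := by simp only [s]; field_simp
  obtain ⟨R, hRs, hcover⟩ := exists_card_mul_le_and_card_sub_le_card_filter_mem E c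
    (fun i => #(spannedVerts {e ∈ E | c e = i})) (s := s) (by positivity)
    (fun _ _ => Nat.cast_nonneg _) (fun _ _ => by exact_mod_cast card_le_card_spannedVerts_sq _)
  refine ⟨R, ?_, by nlinarith [mul_le_mul_of_nonneg_left hmean (by positivity : 0 ≤ s)]⟩
  have hRε : (#R : ℝ) * ε ≤ 2 * ρ ^ 2 := by
    refine le_of_mul_le_mul_right ?_ hn0
    nlinarith [mul_le_mul_of_nonneg_right (hRs.trans hmean) (by positivity : (0 : ℝ) ≤ 2 * ρ)]
  have hrε : 18 * ρ ^ 2 ≤ r * ε ^ 2 := (div_le_iff₀ (by positivity)).1 hr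
  exact_mod_cast (show (#R : ℝ) ≤ r by nlinarith)

/-- In a `ρ`-mean colored `n`-vertex graph with at least `n²/4` edges, if
`r ≥ 18ρ²/ε²` then the `r` largest color classes together contain at least `e − εn²/2`
edges; i.e., there is a set `R` of at most `r` colors covering all but at most `εn²/2`
of the edges. -/
theorem top_r_color_classes {V : Type*} [Fintype V] (G : SimpleGraph V)
    (c : Sym2 V → ℕ) (n : ℕ) (hn : Fintype.card V = n)
    (ρ ε : ℝ) (hρ : 1 ≤ ρ) (hε : 0 < ε)
    (hmean : (∑ v, (colorsAt G c v : ℝ)) ≤ ρ * n)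
    (r : ℕ) (hr : 18 * ρ ^ 2 / ε ^ 2 ≤ (r : ℝ))
    (he : (n ^ 2 : ℝ) / 4 ≤ (G.edgeFinset.card : ℝ)) :
    ∃ R : Finset ℕ, R.card ≤ r ∧
      (G.edgeFinset.card : ℝ) - ε * n ^ 2 / 2 ≤
        ((G.edgeFinset.filter (fun e => c e ∈ R)).card : ℝ) :=
  top_r_color_classes_general G c n hn ρ ε hρ hε hmean r hr
end
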